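/- In the block construction, writing p_j = N_j/|F| for the probability that a uniformly random member of F contains exactly j blocks, and τ = m · 2^{−s}, we have p_j ≤ τ^{j−1} · p_1 for all j ∈ [m]. -/

import Mathlib

open Finset

/-- A family of finite sets is union-closed if it contains the union of any two of
its members. -/
def UnionClosed {α : Type*} [DecidableEq α] (F : Finset (Finset α)) : Prop :=
  ∀ A ∈ F, ∀ B ∈ F, A ∪ B ∈ F

/-- The abundance of `x` with respect to a family `F`. -/
noncomputable def abundance {α : Type*} [DecidableEq α] (F : Finset (Finset α)) (x : α) : ℝ :=
  ((F.filter (fun A => x ∈ A)).card : ℝ) / (F.card : ℝ)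

/-- The average overlap density of `F`. -/
noncomputable def AOD {α : Type*} [DecidableEq α] (F : Finset (Finset α)) : ℝ :=
  (1 / (((F.erase ∅).card : ℝ))) *
    ∑ A ∈ F.erase ∅, (1 / (A.card : ℝ)) * ∑ x ∈ A, abundance F x

/-- The union-closed family generated by `G = {B i ∪ {j} : i, j ∈ T}`:
all unions of nonempty subcollections of `G`. -/
def blockFamily {n m : ℕ} (B : Fin m → Finset (Fin n)) (T : Finset (Fin n)) :
    Finset (Finset (Fin n)) :=
  ((((univ : Finset (Fin m)) ×ˢ T).image (fun p => B p.1 ∪ {p.2})).powerset.filter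
      (fun C => C.Nonempty)).image (fun C => C.sup id)

/-!
A member of the family is a nonempty union of blocks `⋃_{i ∈ S} B_i` together with an arbitrary
part of `T` outside it, and since `|T_i| < |B_i|` the blocks it contains are exactly those of `S`.
Hence `N_j` counts pairs of a `j`-set `S` of blocks and a subset of the `(m - j)s` points of `T`
outside them: `N_j = C(m, j) 2^{(m-j)s}`, and `C(m, j) ≤ m^j` gives `N_j ≤ τ^{j-1} N_1`.
-/

section Blocks

open Function

variable {ι α : Type*} [Fintype ι] [DecidableEq α] {B T : ι → Finset α}

def blocksOf (B : ι → Finset α) (A : Finset α) : Finset ι :=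
  univ.filter fun i => B i ⊆ A

@[simp]
theorem mem_blocksOf {A : Finset α} {i : ι} : i ∈ blocksOf B A ↔ B i ⊆ A := by
  simp [blocksOf]

theorem biUnion_blocksOf_subset (A : Finset α) : (blocksOf B A).biUnion B ⊆ A := by
  simp

theorem blocksOf_eq (hB : Pairwise (Disjoint on B)) {U A : Finset α} {S : Finset ι}
    (hBU : ∀ i, ¬ B i ⊆ U) (hSA : S.biUnion B ⊆ A) (hAS : A ⊆ S.biUnion B ∪ U) :
    blocksOf B A = S := by
  ext i
  rw [mem_blocksOf]
  refine ⟨fun hi => ?_, fun hi => (subset_biUnion_of_mem B hi).trans hSA⟩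
  by_contra hiS
  refine hBU i fun x hx => ?_
  rcases mem_union.1 (hAS (hi hx)) with hx' | hx'
  · obtain ⟨i', hi', hxi'⟩ := mem_biUnion.1 hx'
    exact absurd hx (disjoint_left.1 (hB fun h : i' = i => hiS (h ▸ hi')) hxi')
  · exact hx'

theorem not_subset_biUnion (hB : Pairwise (Disjoint on B)) (hT : ∀ i, T i ⊆ B i)
    (hlt : ∀ i, #(T i) < #(B i)) (i : ι) : ¬ B i ⊆ univ.biUnion T := by
  intro h
  refine (hlt i).not_ge (card_le_card fun x hx => ?_)
  obtain ⟨i', -, hx'⟩ := mem_biUnion.1 (h hx)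
  obtain rfl : i' = i := by_contra fun hne => disjoint_left.1 (hB hne) (hT i' hx') hx
  exact hx'

variable [DecidableEq ι]

theorem biUnion_union_biUnion_univ (hT : ∀ i, T i ⊆ B i) (S : Finset ι) :
    S.biUnion B ∪ univ.biUnion T = S.biUnion B ∪ Sᶜ.biUnion T := by
  ext x
  simp only [mem_union, mem_biUnion, mem_univ, true_and, mem_compl]
  constructor
  · rintro (h | ⟨i, hx⟩)
    · exact .inl h
    · by_cases hi : i ∈ S
      exacts [.inl ⟨i, hi, hT i hx⟩, .inr ⟨i, hi, hx⟩]
  · rintro (h | ⟨i, -, hx⟩)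
    exacts [.inl h, .inr ⟨i, hx⟩]

theorem disjoint_biUnion_biUnion_compl (hB : Pairwise (Disjoint on B)) (hT : ∀ i, T i ⊆ B i)
    (S : Finset ι) : Disjoint (S.biUnion B) (Sᶜ.biUnion T) := by
  simp only [disjoint_biUnion_left, disjoint_biUnion_right, mem_compl]
  exact fun i hi j hj => (hB fun h : j = i => hi (h ▸ hj)).mono_right (hT i)

theorem card_biUnion_compl {s : ℕ} (hB : Pairwise (Disjoint on B)) (hT : ∀ i, T i ⊆ B i)
    (hTcard : ∀ i, #(T i) = s) (S : Finset ι) :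
    #(Sᶜ.biUnion T) = (Fintype.card ι - #S) * s := by
  rw [card_biUnion fun i _ j _ hij => (hB hij).mono (hT i) (hT j),
    sum_const_nat fun i _ => hTcard i, card_compl]

end Blocks

theorem card_Icc_union {α : Type*} [DecidableEq α] {X Y : Finset α} (h : Disjoint X Y) :
    #(Icc X (X ∪ Y)) = 2 ^ #Y := by
  rw [card_Icc_finset subset_union_left, card_union_of_disjoint h, Nat.add_sub_cancel_left]

theorem mem_blockFamily_iff {n m : ℕ} {B : Fin m → Finset (Fin n)} {T A : Finset (Fin n)} :
    A ∈ blockFamily B T ↔ ∃ S : Finset (Fin m), S.Nonempty ∧ (A ∩ T).Nonempty ∧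
      S.biUnion B ⊆ A ∧ A ⊆ S.biUnion B ∪ T := by
  simp only [blockFamily, mem_image, mem_filter, mem_powerset]
  constructor
  · rintro ⟨C, ⟨hCgen, ⟨c, hc⟩⟩, rfl⟩
    have hgen : ∀ c ∈ C, ∃ i, ∃ t ∈ T, B i ∪ {t} = c := fun c hc => by
      simpa using hCgen hc
    have hle : ∀ c ∈ C, c ⊆ C.sup id := fun c hc => le_sup (f := id) hc
    obtain ⟨i, t, ht, rfl⟩ := hgen c hc
    refine ⟨blocksOf B (C.sup id), ⟨i, ?_⟩, ⟨t, mem_inter.2 ⟨hle _ hc (by simp), ht⟩⟩,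
      biUnion_blocksOf_subset _, fun x hx => ?_⟩
    · exact mem_blocksOf.2 (subset_union_left.trans (hle _ hc))
    obtain ⟨c', hc', hxc'⟩ := mem_sup.1 hx
    obtain ⟨j, u, hu, rfl⟩ := hgen c' hc'
    rcases mem_union.1 hxc' with hxj | hxu
    · exact mem_union_left _ <|
        mem_biUnion.2 ⟨j, mem_blocksOf.2 (subset_union_left.trans (hle _ hc')), hxj⟩
    · exact mem_union_right _ (mem_singleton.1 hxu ▸ hu)
  · rintro ⟨S, ⟨i, hi⟩, ⟨t, ht⟩, hSA, hAS⟩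
    refine ⟨(S ×ˢ (A ∩ T)).image fun p => B p.1 ∪ {p.2}, ⟨?_, ?_⟩, ?_⟩
    · exact image_subset_image (product_subset_product (subset_univ S) inter_subset_right)
    · exact ⟨B i ∪ {t}, mem_image.2 ⟨(i, t), mem_product.2 ⟨hi, ht⟩, rfl⟩⟩
    · rw [sup_image]
      ext x
      simp only [mem_sup, mem_product, Function.comp_apply, id, mem_union, mem_singleton,
        Prod.exists]
      constructor
      · rintro ⟨j, u, ⟨hj, hu⟩, hxj | rfl⟩
        exacts [hSA (mem_biUnion.2 ⟨j, hj, hxj⟩), (mem_inter.1 hu).1]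
      · intro hx
        rcases mem_union.1 (hAS hx) with hxS | hxT
        · obtain ⟨j, hj, hxj⟩ := mem_biUnion.1 hxS
          exact ⟨j, t, ⟨hj, ht⟩, .inl hxj⟩
        · exact ⟨i, x, ⟨hi, mem_inter.2 ⟨hx, hxT⟩⟩, .inr rfl⟩

section BlockConstruction

open Function

variable {n m : ℕ} {B T : Fin m → Finset (Fin n)}

theorem mem_blockFamily_and_blocksOf_eq_iff (hB : Pairwise (Disjoint on B))
    (hT : ∀ i, T i ⊆ B i) (hTne : ∀ i, (T i).Nonempty) (hlt : ∀ i, #(T i) < #(B i))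
    {S : Finset (Fin m)} (hS : S.Nonempty) {A : Finset (Fin n)} :
    A ∈ blockFamily B (univ.biUnion T) ∧ blocksOf B A = S ↔
      A ∈ Icc (S.biUnion B) (S.biUnion B ∪ Sᶜ.biUnion T) := by
  rw [mem_Icc, ← biUnion_union_biUnion_univ hT]
  constructor
  · rintro ⟨hA, rfl⟩
    obtain ⟨S', -, -, hS'A, hAS'⟩ := mem_blockFamily_iff.1 hA
    rw [blocksOf_eq hB (not_subset_biUnion hB hT hlt) hS'A hAS']
    exact ⟨hS'A, hAS'⟩
  · rintro ⟨hSA, hAS⟩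
    refine ⟨mem_blockFamily_iff.2 ⟨S, hS, ?_, hSA, hAS⟩,
      blocksOf_eq hB (not_subset_biUnion hB hT hlt) hSA hAS⟩
    obtain ⟨i, hi⟩ := hS
    obtain ⟨t, ht⟩ := hTne i
    exact ⟨t, mem_inter.2
      ⟨hSA (mem_biUnion.2 ⟨i, hi, hT i ht⟩), mem_biUnion.2 ⟨i, mem_univ _, ht⟩⟩⟩

theorem filter_blockFamily_card_blocksOf_eq (hB : Pairwise (Disjoint on B))
    (hT : ∀ i, T i ⊆ B i) (hTne : ∀ i, (T i).Nonempty) (hlt : ∀ i, #(T i) < #(B i))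
    {j : ℕ} (hj : 0 < j) :
    (blockFamily B (univ.biUnion T)).filter (fun A => #(blocksOf B A) = j) =
      (powersetCard j univ).biUnion fun S =>
        Icc (S.biUnion B) (S.biUnion B ∪ Sᶜ.biUnion T) := by
  have key {S : Finset (Fin m)} (hS : #S = j) {A : Finset (Fin n)} :=
    mem_blockFamily_and_blocksOf_eq_iff hB hT hTne hlt (A := A) (card_pos.1 (hS ▸ hj))
  ext A
  simp only [mem_filter, mem_biUnion, mem_powersetCard, subset_univ, true_and]
  constructor
  · rintro ⟨hA, rfl⟩
    exact ⟨blocksOf B A, rfl, (key rfl).1 ⟨hA, rfl⟩⟩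
  · rintro ⟨S, hS, hAS⟩
    obtain ⟨hA, rfl⟩ := (key hS).2 hAS
    exact ⟨hA, hS⟩

theorem card_filter_blockFamily_card_blocksOf_eq {s : ℕ} (hB : Pairwise (Disjoint on B))
    (hT : ∀ i, T i ⊆ B i) (hTcard : ∀ i, #(T i) = s) (hs : 0 < s) (hlt : ∀ i, s < #(B i))
    {j : ℕ} (hj : 0 < j) :
    #((blockFamily B (univ.biUnion T)).filter (fun A => #(blocksOf B A) = j)) =
      m.choose j * 2 ^ ((m - j) * s) := by
  have hTne i : (T i).Nonempty := card_pos.1 (hTcard i ▸ hs)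
  have hlt' i : #(T i) < #(B i) := hTcard i ▸ hlt i
  rw [filter_blockFamily_card_blocksOf_eq hB hT hTne hlt' hj, card_biUnion]
  · rw [sum_congr rfl fun S hS => by
      rw [card_Icc_union (disjoint_biUnion_biUnion_compl hB hT S), card_biUnion_compl hB hT hTcard,
        Fintype.card_fin, (mem_powersetCard.1 hS).2]]
    rw [sum_const, card_powersetCard, card_univ, Fintype.card_fin, smul_eq_mul]
  · intro S₁ hS₁ S₂ hS₂ hne
    rw [onFun, disjoint_left]
    intro A hA₁ hA₂
    have key {S : Finset (Fin m)} (hS : S ∈ powersetCard j univ) :=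
      mem_blockFamily_and_blocksOf_eq_iff hB hT hTne hlt' (A := A)
        (card_pos.1 ((mem_powersetCard.1 hS).2 ▸ hj))
    exact hne (((key hS₁).2 hA₁).2.symm.trans ((key hS₂).2 hA₂).2)

end BlockConstruction

theorem choose_mul_two_pow_le {m j s : ℕ} (hj : 1 ≤ j) (hjm : j ≤ m) :
    ((m.choose j * 2 ^ ((m - j) * s) : ℕ) : ℝ) ≤
      ((m : ℝ) * 2 ^ (-(s : ℤ))) ^ (j - 1) *
        ((m.choose 1 * 2 ^ ((m - 1) * s) : ℕ) : ℝ) := by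
  have hexp : (m - 1) * s = (m - j) * s + s * (j - 1) := by
    rw [mul_comm s, ← add_mul]; congr 1; omega
  have hm : (m : ℝ) ^ j = m ^ (j - 1) * m := by rw [← pow_succ, Nat.sub_add_cancel hj]
  calc ((m.choose j * 2 ^ ((m - j) * s) : ℕ) : ℝ)
      ≤ (m : ℝ) ^ j * 2 ^ ((m - j) * s) := by
        push_cast; gcongr; exact_mod_cast Nat.choose_le_pow m j
    _ = ((m : ℝ) * 2 ^ (-(s : ℤ))) ^ (j - 1) *
          ((m.choose 1 * 2 ^ ((m - 1) * s) : ℕ) : ℝ) := by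
        rw [Nat.choose_one_right, hexp, hm, zpow_neg, zpow_natCast]
        push_cast
        rw [pow_add, pow_mul, mul_pow, inv_pow]
        field_simp
        ring

theorem blockFamily_pj_le_general
    (k m s : ℕ) (hs : 0 < s) (hsk : s + 2 ≤ k)
    (B : Fin m → Finset (Fin (k * m)))
    (hBcard : ∀ i, (B i).card = k)
    (hBdisj : ∀ i j : Fin m, i ≠ j → Disjoint (B i) (B j))
    (T : Fin m → Finset (Fin (k * m)))
    (hT : ∀ i, T i ⊆ B i) (hTcard : ∀ i, (T i).card = s)
    (N : ℕ → ℕ)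
    (hN : ∀ j : ℕ, N j = ((blockFamily B ((univ : Finset (Fin m)).biUnion T)).filter
      (fun A => (univ.filter (fun i : Fin m => B i ⊆ A)).card = j)).card)
    (p : ℕ → ℝ)
    (hp : ∀ j : ℕ, p j = (N j : ℝ) / ((blockFamily B ((univ : Finset (Fin m)).biUnion T)).card : ℝ))
    (τ : ℝ) (hτ : τ = (m : ℝ) * (2 : ℝ) ^ (-(s : ℤ))) :
    ∀ j : ℕ, 1 ≤ j → j ≤ m → p j ≤ τ ^ (j - 1) * p 1 := by
  have hN_eq {j : ℕ} (hj : 1 ≤ j) : N j = m.choose j * 2 ^ ((m - j) * s) :=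
    (hN j).trans <| card_filter_blockFamily_card_blocksOf_eq (s := s) hBdisj hT hTcard hs
      (fun i => by rw [hBcard]; omega) hj
  intro j hj hjm
  rw [hp, hp, ← mul_div_assoc, hN_eq hj, hN_eq le_rfl, hτ]
  gcongr
  exact choose_mul_two_pow_le hj hjm

/-- In the block construction, with `p_j = N_j/|F|` and `τ = m · 2^{−s}`,
we have `p_j ≤ τ^{j−1} · p_1` for all `j ∈ [m]`. -/
theorem blockFamily_pj_le
    (k m s : ℕ) (hk : 0 < k) (hm : 2 ≤ m) (hs : 0 < s) (hsk : s + 2 ≤ k)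
    (B : Fin m → Finset (Fin (k * m)))
    (hBcard : ∀ i, (B i).card = k)
    (hBdisj : ∀ i j : Fin m, i ≠ j → Disjoint (B i) (B j))
    (hBcover : (Finset.univ : Finset (Fin m)).biUnion B = (Finset.univ : Finset (Fin (k * m))))
    (T : Fin m → Finset (Fin (k * m)))
    (hT : ∀ i, T i ⊆ B i) (hTcard : ∀ i, (T i).card = s)
    (N : ℕ → ℕ)
    (hN : ∀ j : ℕ, N j = ((blockFamily B ((univ : Finset (Fin m)).biUnion T)).filter
      (fun A => (univ.filter (fun i : Fin m => B i ⊆ A)).card = j)).card)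
    (p : ℕ → ℝ)
    (hp : ∀ j : ℕ, p j = (N j : ℝ) / ((blockFamily B ((univ : Finset (Fin m)).biUnion T)).card : ℝ))
    (τ : ℝ) (hτ : τ = (m : ℝ) * (2 : ℝ) ^ (-(s : ℤ))) :
    ∀ j : ℕ, 1 ≤ j → j ≤ m → p j ≤ τ ^ (j - 1) * p 1 :=
  blockFamily_pj_le_general k m s hs hsk B hBcard hBdisj T hT hTcard N hN p hp τ hτ
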